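/- arXiv:0708.4342 — 5 statements merged into one kernel-verified Lean document; each statement's English description precedes it below -/
import Mathlib

section
/- Let N ≥ 1 be an integer, ω = exp(2πi/N), x ∈ ℂ with x^N ≠ 1, and let α be an integer with 1 ≤ α ≤ N. Then ∑_{γ=0}^{N−1} ω^{α γ} / (1 − ω^γ x) = N x^{N−α} / (1 − x^N). -/
open Finset

theorem sum_pow_div_one_sub_root_of_unity (N : ℕ) (hN : 1 ≤ N) (ω : ℂ)
    (hω : ω = Complex.exp (2 * (Real.pi : ℂ) * Complex.I / (N : ℂ)))
    (x : ℂ) (hx : x ^ N ≠ 1) (α : ℕ) (hα1 : 1 ≤ α) (hαN : α ≤ N) :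
    ∑ γ ∈ Finset.range N, ω ^ (α * γ) / (1 - ω ^ γ * x) =
      (N : ℂ) * x ^ (N - α) / (1 - x ^ N) := by
  have hN0 : N ≠ 0 := by omega
  have hprim : IsPrimitiveRoot ω N := by
    rw [hω]; exact Complex.isPrimitiveRoot_exp N hN0
  have hωN : ω ^ N = 1 := hprim.pow_eq_one
  have hpowN : ∀ γ : ℕ, (ω ^ γ * x) ^ N = x ^ N := by
    intro γ
    rw [mul_pow, ← pow_mul, mul_comm γ N, pow_mul, hωN, one_pow, one_mul]
  have hxN : (1 : ℂ) - x ^ N ≠ 0 := sub_ne_zero.mpr (Ne.symm hx)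
  have hne : ∀ γ : ℕ, (1 : ℂ) - ω ^ γ * x ≠ 0 := by
    intro γ h
    apply hx
    have : ω ^ γ * x = 1 := by linear_combination -h
    calc x ^ N = (ω ^ γ * x) ^ N := (hpowN γ).symm
      _ = 1 := by rw [this, one_pow]
  -- geometric series expansion
  have key : ∀ γ : ℕ, ω ^ (α * γ) / (1 - ω ^ γ * x)
      = (∑ k ∈ Finset.range N, ω ^ (α * γ + γ * k) * x ^ k) / (1 - x ^ N) := by
    intro γ
    rw [div_eq_div_iff (hne γ) hxN]
    have hg := geom_sum_mul (ω ^ γ * x) N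
    have expand : ∑ k ∈ Finset.range N, ω ^ (α * γ + γ * k) * x ^ k
        = ω ^ (α * γ) * ∑ k ∈ Finset.range N, (ω ^ γ * x) ^ k := by
      rw [Finset.mul_sum]
      refine Finset.sum_congr rfl fun k _ => ?_
      rw [mul_pow, ← pow_mul, pow_add]
      ring
    rw [expand]
    have h2 : (∑ k ∈ Finset.range N, (ω ^ γ * x) ^ k) * (1 - ω ^ γ * x)
        = 1 - x ^ N := by
      have := hpowN γ
      linear_combination -hg - this
    rw [mul_assoc, h2]
  rw [Finset.sum_congr rfl fun γ _ => key γ, ← Finset.sum_div]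
  congr 1
  rw [Finset.sum_comm]
  have inner : ∀ k ∈ Finset.range N,
      (∑ γ ∈ Finset.range N, ω ^ (α * γ + γ * k) * x ^ k)
        = (if k = N - α then (N : ℂ) * x ^ (N - α) else 0) := by
    intro k hk
    rw [Finset.mem_range] at hk
    have hterm : ∀ γ : ℕ, ω ^ (α * γ + γ * k) * x ^ k = (ω ^ (α + k)) ^ γ * x ^ k := by
      intro γ
      rw [← pow_mul]
      ring_nf
    simp only [hterm, ← Finset.sum_mul]
    by_cases hdvd : k = N - α
    · subst hdvd
      have : α + (N - α) = N := by omega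
      rw [this, hωN]
      simp
    · have hndvd : ¬ (N : ℕ) ∣ (α + k) := by
        rintro ⟨c, hc⟩
        have hc2 : c < 2 := by
          by_contra h
          push_neg at h
          have : N * 2 ≤ N * c := Nat.mul_le_mul_left N h
          omega
        interval_cases c <;> omega
      have hne1 : ω ^ (α + k) ≠ 1 := fun h => hndvd (hprim.pow_eq_one_iff_dvd _ |>.mp h)
      have : ∑ γ ∈ Finset.range N, (ω ^ (α + k)) ^ γ = 0 := by
        have hg := geom_sum_mul (ω ^ (α + k)) N
        have h1 : (ω ^ (α + k)) ^ N = 1 := by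
          rw [← pow_mul, mul_comm (α + k) N, pow_mul, hωN, one_pow]
        rw [h1, sub_self] at hg
        rcases mul_eq_zero.mp hg with h | h
        · exact h
        · exact absurd (by linear_combination h) hne1
      rw [this, zero_mul, if_neg hdvd]
  rw [Finset.sum_congr rfl inner, Finset.sum_ite_eq' (Finset.range N) (N - α)]
  rw [if_pos (Finset.mem_range.mpr (by omega))]
end

section
/- Let N ≥ 1 be an integer, ω = exp(2πi/N), and let x, y ∈ ℂ satisfy x^N + y^N = 1 with y ≠ 0. For a parameter u ∈ ℂ let w_{x,u} : ℤ → ℂ be the N-periodic function with w_{x,u}(0) = 1 and w_{x,u}(γ) = w_{x,u}(γ−1) · u/(1 − ω^γ x) for γ = 1, ..., N−1. Then for all integers ρ, ρ': ∑_{γ=0}^{N−1} w_{x,y}(γ − ρ) / w_{x, y/ω}(γ − ρ' − 1) equals (N/ω)(x/y)^{N−1} if ρ ≡ ρ' (mod N), and equals 0 otherwise. -/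
/-!
Because `∏_{k<N} (1 - ω^k x) = 1 - x^N = y^N`, the defining recursion of `w_{x,u}` also holds
at `γ ≡ 0 (mod N)`, hence for every `γ ∈ ℤ`; comparing recursions gives
`w_{x,y}(γ) = ω^γ w_{x,y/ω}(γ)`. Let `0 ≤ d < N` with `d ≡ ρ' - ρ` and `c = γ - ρ' - 1`. Then
`w_{x,y}(c + d + 1) / w_{x,y}(c) = y^{d+1} / ∏_{k=1}^{d+1} (1 - ω^k z)` with `z = ω^c x`, and
completing the product to `1 - z^N = y^N` turns the summand into `y^{d+1-N} ω^c P(ω^c x)` for the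
polynomial `P = ∏_{k=d+2}^{N} (1 - ω^k X)` of degree `N - 1 - d`. Summing `ω^c P(ω^c x)` over a
period of `c` kills every coefficient of `P` except the one of `X^{N-1}`, which is `0` unless
`d = 0`, and then `(1 - ωX) P = 1 - X^N` shows it is `ω⁻¹`.
-/

open Finset Polynomial

theorem Function.Periodic.eq_of_intModEq {α : Type*} {f : ℤ → α} {n : ℤ}
    (h : Function.Periodic f n) {a b : ℤ} (hab : a ≡ b [ZMOD n]) : f a = f b := by
  obtain ⟨q, hq⟩ := Int.modEq_iff_dvd.mp hab
  rw [show b = a + q * n by linear_combination hq]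
  exact ((h.int_mul q) a).symm

theorem Int.eq_of_mul_eq_mul_sub_one {M : Type*} [MonoidWithZero M] [IsRightCancelMulZero M]
    {a : ℤ → M} {b : M} {f g : ℤ → M} (ha : ∀ c, a c ≠ 0) (hb : b ≠ 0)
    (hf : ∀ c, f c * a c = f (c - 1) * b) (hg : ∀ c, g c * a c = g (c - 1) * b)
    (h0 : f 0 = g 0) : f = g := by
  funext c
  induction c using Int.induction_on with
  | zero => exact h0
  | succ n ih => exact mul_right_cancel₀ (ha _) (by rw [hf, hg, add_sub_cancel_right, ih])
  | pred n ih => exact mul_right_cancel₀ hb (by rw [← hf, ← hg, ih])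

theorem Int.exists_natCast_modEq {n : ℕ} [NeZero n] (a : ℤ) :
    ∃ d < n, (d : ℤ) ≡ a [ZMOD n] ∧ ((n : ℤ) ∣ a ↔ d = 0) :=
  ⟨(a : ZMod n).val, ZMod.val_lt _, (ZMod.intCast_eq_intCast_iff _ _ n).mp (by simp),
    by rw [ZMod.val_eq_zero, ZMod.intCast_zmod_eq_zero_iff_dvd]⟩

theorem Polynomial.natDegree_prod_one_sub_C_mul_X_le {R ι : Type*} [CommRing R] (s : Finset ι)
    (a : ι → R) : (∏ i ∈ s, (1 - C (a i) * X)).natDegree ≤ #s := by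
  refine (natDegree_prod_le _ _).trans ?_
  refine (sum_le_card_nsmul s _ 1 fun i _ => ?_).trans_eq (smul_eq_mul .. |>.trans (mul_one _))
  compute_degree!

namespace IsPrimitiveRoot

section CommRing

variable {R : Type*} [CommRing R] [IsDomain R] {ζ : R} {n : ℕ}

theorem prod_one_sub_pow_mul (h : IsPrimitiveRoot ζ n) (hn : 0 < n) (z : R) :
    ∏ i ∈ range n, (1 - ζ ^ i * z) = 1 - z ^ n := by
  classical
  rw [← one_pow n, h.pow_sub_pow_eq_prod_sub_mul 1 z hn, one_pow, nthRootsFinset_def,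
    h.nthRoots_eq (one_pow n), Multiset.toFinset_map, Multiset.toFinset_range,
    prod_image fun i hi j hj hij => h.injOn_pow hi hj (by simpa using hij)]
  simp

theorem prod_one_sub_pow_succ_mul (h : IsPrimitiveRoot ζ n) (hn : 0 < n) (z : R) :
    ∏ i ∈ range n, (1 - ζ ^ (i + 1) * z) = 1 - z ^ n := by
  simp_rw [pow_succ, mul_assoc]
  rw [h.prod_one_sub_pow_mul hn, mul_pow, h.pow_eq_one, one_mul]

theorem prod_one_sub_C_pow_succ_mul_X (h : IsPrimitiveRoot ζ n) (hn : 0 < n) :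
    ∏ i ∈ range n, (1 - C (ζ ^ (i + 1)) * X) = 1 - X ^ n := by
  simpa using (h.map_of_injective C_injective).prod_one_sub_pow_succ_mul hn X

theorem geom_sum_pow (h : IsPrimitiveRoot ζ n) (j : ℕ) :
    ∑ i ∈ range n, (ζ ^ j) ^ i = if n ∣ j then (n : R) else 0 := by
  split_ifs with hj
  · simp [(h.pow_eq_one_iff_dvd j).mpr hj]
  · have hne : ζ ^ j - 1 ≠ 0 := sub_ne_zero.mpr fun h1 => hj ((h.pow_eq_one_iff_dvd j).mp h1)
    refine (mul_eq_zero.mp ?_).resolve_right hne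
    rw [geom_sum_mul, ← pow_mul, mul_comm, pow_mul, h.pow_eq_one, one_pow, sub_self]

end CommRing

section Field

variable {K : Type*} [Field K] {ζ : K} {n : ℕ}

theorem zpow_pow_eq_one (h : IsPrimitiveRoot ζ n) (c : ℤ) : (ζ ^ c) ^ n = 1 := by
  rw [← zpow_natCast, ← zpow_mul, mul_comm, zpow_mul, h.zpow_eq_one, one_zpow]

theorem zpow_periodic (h : IsPrimitiveRoot ζ n) (hn : 0 < n) :
    Function.Periodic (fun c : ℤ => ζ ^ c) n := fun c => by
  show ζ ^ (c + n) = ζ ^ c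
  rw [zpow_add₀ (h.ne_zero hn.ne'), h.zpow_eq_one, mul_one]

theorem sum_zpow_sub_mul_eval (h : IsPrimitiveRoot ζ n) (hn : 0 < n) {p : K[X]}
    (hp : p.natDegree < n) (s : ℤ) (z : K) :
    ∑ i ∈ range n, ζ ^ ((i : ℤ) - s) * p.eval (ζ ^ ((i : ℤ) - s) * z) =
      n * p.coeff (n - 1) * z ^ (n - 1) := by
  set t := ζ ^ (-s)
  have hterm : ∀ i j : ℕ, ζ ^ ((i : ℤ) - s) * (p.coeff j * (ζ ^ ((i : ℤ) - s) * z) ^ j) =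
      p.coeff j * z ^ j * t ^ (j + 1) * (ζ ^ (j + 1)) ^ i := by
    intro i j
    rw [sub_eq_add_neg, zpow_add₀ (h.ne_zero hn.ne'), zpow_natCast, ← pow_mul, mul_comm (j + 1),
      pow_mul]
    ring
  have hdvd : ∀ j ∈ range n, n ∣ j + 1 ↔ j = n - 1 := by
    intro j hj
    rw [mem_range] at hj
    refine ⟨fun hd => ?_, fun hj => ⟨1, by omega⟩⟩
    have := Nat.le_of_dvd (Nat.succ_pos j) hd
    omega
  simp_rw [eval_eq_sum_range' hp, mul_sum, hterm]
  rw [sum_comm, sum_eq_single_of_mem (n - 1) (mem_range.mpr (by omega))]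
  · rw [← mul_sum, h.geom_sum_pow, if_pos ⟨1, by omega⟩, Nat.sub_add_cancel hn,
      h.zpow_pow_eq_one (-s)]
    ring
  · intro j hj hjn
    rw [← mul_sum, h.geom_sum_pow, if_neg ((hdvd j hj).not.mpr hjn), mul_zero]

theorem coeff_prod_Ico_one_sub_C_pow_succ_mul_X (h : IsPrimitiveRoot ζ n) (hn : 0 < n) {d : ℕ}
    (hd : d < n) :
    (∏ i ∈ Ico (d + 1) n, (1 - C (ζ ^ (i + 1)) * X)).coeff (n - 1) =
      if d = 0 then ζ⁻¹ else 0 := by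
  have hdeg := natDegree_prod_one_sub_C_mul_X_le (Ico (d + 1) n) fun i => ζ ^ (i + 1)
  rw [Nat.card_Ico] at hdeg
  split_ifs with hd0
  · subst hd0
    set G := ∏ i ∈ Ico (0 + 1) n, (1 - C (ζ ^ (i + 1)) * X)
    have hG : (1 - C ζ * X) * G = 1 - X ^ n := by
      rw [← h.prod_one_sub_C_pow_succ_mul_X hn, ← prod_range_mul_prod_Ico _ hn, prod_range_one,
        zero_add, pow_one]
    obtain ⟨m, rfl⟩ : ∃ m, n = m + 1 := ⟨n - 1, by omega⟩
    have hcoeff := congrArg (coeff · (m + 1)) hG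
    simp only [sub_mul, one_mul, mul_assoc, coeff_sub, coeff_C_mul, coeff_X_mul, coeff_one,
      coeff_X_pow, coeff_eq_zero_of_natDegree_lt (hdeg.trans_lt (by omega : m + 1 - 1 < m + 1)),
      Nat.add_eq_zero_iff, one_ne_zero, and_false, if_false, if_true, zero_sub, neg_inj] at hcoeff
    rw [Nat.add_sub_cancel]
    exact eq_inv_of_mul_eq_one_right hcoeff
  · exact coeff_eq_zero_of_natDegree_lt (by omega)

end Field

end IsPrimitiveRoot

section PeriodicWeight

variable {K : Type*} [Field K] {N : ℕ} {ω x u : K}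

/-- `w` is the weight function `w_{x,u}` of the one-site BBS eigenvectors. -/
structure IsPeriodicWeight (N : ℕ) (ω x u : K) (w : ℤ → K) : Prop where
  periodic : Function.Periodic w N
  map_zero : w 0 = 1
  step : ∀ γ : ℤ, 1 ≤ γ → γ ≤ (N : ℤ) - 1 → w γ = w (γ - 1) * (u / (1 - ω ^ γ * x))

theorem one_sub_zpow_mul_ne_zero (hω : IsPrimitiveRoot ω N) (hx : x ^ N ≠ 1) (γ : ℤ) :
    1 - ω ^ γ * x ≠ 0 := by
  intro h
  apply hx
  calc x ^ N = (ω ^ γ) ^ N * x ^ N := by rw [hω.zpow_pow_eq_one, one_mul]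
    _ = 1 := by rw [← mul_pow, ← sub_eq_zero.mp h, one_pow]

namespace IsPeriodicWeight

variable {w : ℤ → K}

theorem mul_prod_eq_pow (hw : IsPeriodicWeight N ω x u w) (hω : IsPrimitiveRoot ω N)
    (hx : x ^ N ≠ 1) {a : ℕ} (ha : a < N) :
    w a * ∏ k ∈ range a, (1 - ω ^ (k + 1) * x) = u ^ a := by
  induction a with
  | zero => simp [hw.map_zero]
  | succ a ih =>
    have hstep := hw.step (a + 1) (by omega) (by omega)
    have hne := one_sub_zpow_mul_ne_zero hω hx (a + 1)
    rw [add_sub_cancel_right, ← Nat.cast_succ, zpow_natCast] at hstep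
    rw [← Nat.cast_succ, zpow_natCast] at hne
    rw [hstep, prod_range_succ, pow_succ u, ← ih (by omega)]
    field_simp

theorem mul_one_sub_zpow_mul (hw : IsPeriodicWeight N ω x u w) (hω : IsPrimitiveRoot ω N)
    (hN : 0 < N) (hx : x ^ N ≠ 1) (hu : u ^ N = 1 - x ^ N) (γ : ℤ) :
    w γ * (1 - ω ^ γ * x) = w (γ - 1) * u := by
  have hu0 : u ≠ 0 := ne_zero_pow hN.ne' (hu ▸ sub_ne_zero.mpr hx.symm)
  have hres : ∀ r : ℤ, 0 ≤ r → r < N → w r * (1 - ω ^ r * x) = w (r - 1) * u := by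
    intro r hr0 hrN
    rcases hr0.eq_or_lt with rfl | hr
    · -- the one step not among the hypotheses: it closes up because `∏ (1 - ω^k x) = u^N`
      obtain ⟨m, rfl⟩ : ∃ m, N = m + 1 := ⟨N - 1, by omega⟩
      have hwm := hw.mul_prod_eq_pow hω hx (a := m) (by omega)
      have hprod := hω.prod_one_sub_pow_mul hN x
      rw [prod_range_succ', pow_zero, one_mul, ← hu] at hprod
      have hper : w (0 - 1) = w m := by
        rw [← hw.periodic (0 - 1)]
        push_cast
        ring_nf
      rw [hw.map_zero, zpow_zero, one_mul, one_mul, hper]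
      refine mul_left_cancel₀ (pow_ne_zero m hu0) ?_
      linear_combination (x - 1) * hwm + w m * hprod
    · rw [hw.step r hr (by omega)]
      field_simp [one_sub_zpow_mul_ne_zero hω hx r]
  have hmod := Int.mod_modEq γ N
  rw [hw.periodic.eq_of_intModEq hmod.symm, hw.periodic.eq_of_intModEq (hmod.sub_right 1).symm,
    (hω.zpow_periodic hN).eq_of_intModEq hmod.symm]
  exact hres _ (Int.emod_nonneg _ (by omega)) (Int.emod_lt_of_pos _ (by omega))

theorem add_mul_prod (hw : IsPeriodicWeight N ω x u w) (hω : IsPrimitiveRoot ω N) (hN : 0 < N)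
    (hx : x ^ N ≠ 1) (hu : u ^ N = 1 - x ^ N) (c : ℤ) (l : ℕ) :
    w (c + l) * ∏ k ∈ range l, (1 - ω ^ (k + 1) * (ω ^ c * x)) = w c * u ^ l := by
  induction l with
  | zero => simp
  | succ l ih =>
    have hstep := hw.mul_one_sub_zpow_mul hω hN hx hu (c + l + 1)
    have hpow : ω ^ (c + l + 1) = ω ^ (l + 1) * ω ^ c := by
      rw [← zpow_natCast, ← zpow_add₀ (hω.ne_zero hN.ne')]
      push_cast
      ring_nf
    rw [add_sub_cancel_right, hpow] at hstep
    rw [prod_range_succ, pow_succ, Nat.cast_succ, ← add_assoc]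
    linear_combination (∏ k ∈ range l, (1 - ω ^ (k + 1) * (ω ^ c * x))) * hstep + u * ih

theorem ne_zero (hw : IsPeriodicWeight N ω x u w) (hω : IsPrimitiveRoot ω N) (hN : 0 < N)
    (hx : x ^ N ≠ 1) (hu : u ^ N = 1 - x ^ N) (c : ℤ) : w c ≠ 0 := by
  have hu0 : u ≠ 0 := ne_zero_pow hN.ne' (hu ▸ sub_ne_zero.mpr hx.symm)
  have h := hw.add_mul_prod hω hN hx hu 0 (c % N).toNat
  rw [zero_add, Int.toNat_of_nonneg (Int.emod_nonneg _ (by omega)),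
    hw.periodic.eq_of_intModEq (Int.mod_modEq c N), hw.map_zero, one_mul] at h
  intro hc
  rw [hc, zero_mul] at h
  exact pow_ne_zero _ hu0 h.symm

theorem zpow_mul_eq {wR wL : ℤ → K} (hR : IsPeriodicWeight N ω x u wR)
    (hL : IsPeriodicWeight N ω x (u / ω) wL) (hω : IsPrimitiveRoot ω N) (hN : 0 < N)
    (hx : x ^ N ≠ 1) (hu : u ^ N = 1 - x ^ N) : (fun c => ω ^ c * wL c) = wR := by
  have hu' : (u / ω) ^ N = 1 - x ^ N := by rw [div_pow, hω.pow_eq_one, div_one, hu]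
  refine Int.eq_of_mul_eq_mul_sub_one (fun c => one_sub_zpow_mul_ne_zero hω hx c)
    (ne_zero_pow hN.ne' (hu ▸ sub_ne_zero.mpr hx.symm)) (fun c => ?_)
    (hR.mul_one_sub_zpow_mul hω hN hx hu) (by simp [hR.map_zero, hL.map_zero])
  rw [mul_assoc, hL.mul_one_sub_zpow_mul hω hN hx hu' c, zpow_sub_one₀ (hω.ne_zero hN.ne')]
  ring

theorem add_succ_div_eq {wR wL : ℤ → K} (hR : IsPeriodicWeight N ω x u wR)
    (hL : IsPeriodicWeight N ω x (u / ω) wL) (hω : IsPrimitiveRoot ω N) (hN : 0 < N)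
    (hx : x ^ N ≠ 1) (hu : u ^ N = 1 - x ^ N) (c : ℤ) {d : ℕ} (hd : d < N) :
    wR (c + (d + 1 : ℕ)) / wL c = u ^ (d + 1) / u ^ N *
      (ω ^ c * (∏ k ∈ Ico (d + 1) N, (1 - C (ω ^ (k + 1)) * X)).eval (ω ^ c * x)) := by
  set F := ∏ k ∈ range (d + 1), (1 - ω ^ (k + 1) * (ω ^ c * x))
  set G := ∏ k ∈ Ico (d + 1) N, (1 - ω ^ (k + 1) * (ω ^ c * x))
  have hu' : (u / ω) ^ N = 1 - x ^ N := by rw [div_pow, hω.pow_eq_one, div_one, hu]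
  have hFG : F * G = u ^ N := by
    rw [prod_range_mul_prod_Ico _ hd, hω.prod_one_sub_pow_succ_mul hN, mul_pow,
      hω.zpow_pow_eq_one, one_mul, hu]
  have hFG0 : F * G ≠ 0 := hFG ▸ pow_ne_zero _ (ne_zero_pow hN.ne' (hu ▸ sub_ne_zero.mpr hx.symm))
  calc wR (c + (d + 1 : ℕ)) / wL c = wR c * u ^ (d + 1) / F / wL c := by
        rw [eq_div_of_mul_eq (left_ne_zero_of_mul hFG0) (hR.add_mul_prod hω hN hx hu c (d + 1))]
    _ = ω ^ c * wL c * u ^ (d + 1) / F / wL c := by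
        rw [← congrFun (zpow_mul_eq hR hL hω hN hx hu) c]
    _ = u ^ (d + 1) / (F * G) * (ω ^ c * G) := by
        field_simp [left_ne_zero_of_mul hFG0, right_ne_zero_of_mul hFG0,
          hL.ne_zero hω hN hx hu' c]
    _ = _ := by simp [← hFG, G, eval_prod]

end IsPeriodicWeight

end PeriodicWeight

theorem one_site_pairing (N : ℕ) (hN : 1 ≤ N) (ω : ℂ)
    (hω : ω = Complex.exp (2 * (Real.pi : ℂ) * Complex.I / (N : ℂ)))
    (x y : ℂ) (hxy : x ^ N + y ^ N = 1) (hy : y ≠ 0)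
    (wR wL : ℤ → ℂ)
    (hwRper : ∀ γ : ℤ, wR (γ + N) = wR γ) (hwR0 : wR 0 = 1)
    (hwR : ∀ γ : ℤ, 1 ≤ γ → γ ≤ (N : ℤ) - 1 →
      wR γ = wR (γ - 1) * (y / (1 - ω ^ γ * x)))
    (hwLper : ∀ γ : ℤ, wL (γ + N) = wL γ) (hwL0 : wL 0 = 1)
    (hwL : ∀ γ : ℤ, 1 ≤ γ → γ ≤ (N : ℤ) - 1 →
      wL γ = wL (γ - 1) * ((y / ω) / (1 - ω ^ γ * x)))
    (ρ ρ' : ℤ) :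
    ∑ γ ∈ Finset.range N, wR ((γ : ℤ) - ρ) / wL ((γ : ℤ) - ρ' - 1) =
      if (N : ℤ) ∣ (ρ - ρ') then ((N : ℂ) / ω) * (x / y) ^ (N - 1) else 0 := by
  have hprim : IsPrimitiveRoot ω N := hω ▸ Complex.isPrimitiveRoot_exp N (by omega)
  have hyN : y ^ N = 1 - x ^ N := by linear_combination hxy
  have hx : x ^ N ≠ 1 := fun h => pow_ne_zero N hy (by rw [hyN, h, sub_self])
  have hR : IsPeriodicWeight N ω x y wR := ⟨hwRper, hwR0, hwR⟩
  have hL : IsPeriodicWeight N ω x (y / ω) wL := ⟨hwLper, hwL0, hwL⟩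
  have : NeZero N := ⟨by omega⟩
  obtain ⟨d, hdN, hd, hd0⟩ := Int.exists_natCast_modEq (n := N) (ρ' - ρ)
  set P : ℂ[X] := ∏ k ∈ Ico (d + 1) N, (1 - C (ω ^ (k + 1)) * X)
  have hterm (γ : ℕ) : wR (γ - ρ) / wL (γ - ρ' - 1) =
      y ^ (d + 1) / y ^ N * (ω ^ ((γ : ℤ) - (ρ' + 1)) * P.eval (ω ^ ((γ : ℤ) - (ρ' + 1)) * x)) := by
    have hshift : (γ : ℤ) - ρ ≡ γ - ρ' - 1 + (d + 1 : ℕ) [ZMOD N] :=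
      Int.modEq_iff_dvd.mpr (by convert Int.modEq_iff_dvd.mp hd.symm using 1; push_cast; ring)
    rw [hR.periodic.eq_of_intModEq hshift, hR.add_succ_div_eq hL hprim hN hx hyN _ hdN, sub_sub]
  have hPdeg : P.natDegree < N :=
    (natDegree_prod_one_sub_C_mul_X_le _ _).trans_lt (by rw [Nat.card_Ico]; omega)
  rw [sum_congr rfl fun γ _ => hterm γ, ← mul_sum, hprim.sum_zpow_sub_mul_eval hN hPdeg,
    hprim.coeff_prod_Ico_one_sub_C_pow_succ_mul_X hN hdN]
  rw [dvd_sub_comm] at hd0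
  simp only [hd0]
  split_ifs with h0
  · have hyN' : y ^ N = y ^ (N - 1) * y := by rw [← pow_succ, Nat.sub_add_cancel hN]
    rw [h0, zero_add, pow_one, hyN', div_pow]
    field_simp
  · simp
end

section
/- Let N ≥ 1 be an integer, ω = exp(2πi/N), and let r, b_1, b_2 ∈ ℂ satisfy b_1 ≠ b_2, r^N ≠ b_1^N and r^N ≠ b_2^N. Then ∑_{ρ=0}^{N−1} (r ω^{−ρ}) / ( (r ω^{−ρ} − b_1)(r ω^{−ρ} − b_2) ) = N r^N (b_1^N − b_2^N) / ( (b_1 − b_2)(b_1^N − r^N)(b_2^N − r^N) ). -/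
/-!
The points `x_ρ = r ζ^ρ` are the `N` roots of `x^N = r^N`. Partial fractions turn the summand into
`(b₁/(x_ρ - b₁) - b₂/(x_ρ - b₂))/(b₁ - b₂)`. The geometric sum gives
`1/(x - b) = (∑_{i<N} x^i b^{N-1-i})/(r^N - b^N)` on those roots, and since the power sums
`∑_ρ ζ^{ρ i}` vanish for `0 < i < N`, only `i = 0` survives: `∑_ρ b/(x_ρ - b) = N b^N/(r^N - b^N)`.
-/

open Finset

section

variable {K : Type*} [Field K]

theorem one_div_sub_eq_geom_sum₂_div {N : ℕ} {x b : K} (h : x ^ N ≠ b ^ N) :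
    1 / (x - b) = (∑ i ∈ range N, x ^ i * b ^ (N - 1 - i)) / (x ^ N - b ^ N) := by
  rw [← geom_sum₂_mul, div_mul_cancel_left₀, one_div]
  intro hs
  exact h (sub_eq_zero.mp (by rw [← geom_sum₂_mul, hs, zero_mul]))

theorem div_sub_mul_sub_eq {x b₁ b₂ : K} (hb : b₁ ≠ b₂) (h₁ : x ≠ b₁) (h₂ : x ≠ b₂) :
    x / ((x - b₁) * (x - b₂)) = (b₁ / (x - b₁) - b₂ / (x - b₂)) / (b₁ - b₂) := by
  have := sub_ne_zero.mpr hb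
  have := sub_ne_zero.mpr h₁
  have := sub_ne_zero.mpr h₂
  field_simp
  ring

namespace IsPrimitiveRoot

variable {ζ : K} {N : ℕ}

theorem sum_pow_pow_eq_zero (hζ : IsPrimitiveRoot ζ N) {i : ℕ} (hi₀ : i ≠ 0) (hiN : i < N) :
    ∑ ρ ∈ range N, (ζ ^ ρ) ^ i = 0 := by
  have hne : ζ ^ i ≠ 1 := hζ.pow_ne_one_of_pos_of_lt hi₀ hiN
  simp_rw [← pow_mul, mul_comm _ i, pow_mul]
  rw [geom_sum_eq hne, ← pow_mul, mul_comm, pow_mul, hζ.pow_eq_one, one_pow, sub_self, zero_div]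

theorem sum_sum_mul_pow_mul_pow (hζ : IsPrimitiveRoot ζ N) (r b : K) :
    ∑ ρ ∈ range N, ∑ i ∈ range N, (r * ζ ^ ρ) ^ i * b ^ (N - 1 - i) = N * b ^ (N - 1) := by
  rw [sum_comm, sum_eq_single 0]
  · simp
  · intro i hi hi₀
    simp_rw [← sum_mul, mul_pow, ← mul_sum, hζ.sum_pow_pow_eq_zero hi₀ (mem_range.mp hi),
      mul_zero, zero_mul]
  · simp_all

theorem pow_mul_pow_eq (hζ : IsPrimitiveRoot ζ N) (r : K) (ρ : ℕ) : (r * ζ ^ ρ) ^ N = r ^ N := by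
  rw [mul_pow, ← pow_mul, mul_comm ρ, pow_mul, hζ.pow_eq_one, one_pow, mul_one]

theorem sum_one_div_mul_pow_sub (hζ : IsPrimitiveRoot ζ N) {r b : K} (h : r ^ N ≠ b ^ N) :
    ∑ ρ ∈ range N, 1 / (r * ζ ^ ρ - b) = N * b ^ (N - 1) / (r ^ N - b ^ N) := by
  have hρ (ρ : ℕ) : (r * ζ ^ ρ) ^ N ≠ b ^ N := hζ.pow_mul_pow_eq r ρ ▸ h
  simp_rw [fun ρ => one_div_sub_eq_geom_sum₂_div (hρ ρ), hζ.pow_mul_pow_eq, ← sum_div,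
    hζ.sum_sum_mul_pow_mul_pow]

theorem sum_div_mul_pow_sub (hζ : IsPrimitiveRoot ζ N) {r b : K} (h : r ^ N ≠ b ^ N) :
    ∑ ρ ∈ range N, b / (r * ζ ^ ρ - b) = N * b ^ N / (r ^ N - b ^ N) := by
  simp_rw [div_eq_mul_one_div b, ← mul_sum, hζ.sum_one_div_mul_pow_sub h]
  cases N with
  | zero => simp
  | succ n => rw [Nat.add_sub_cancel, pow_succ']; ring

theorem sum_mul_pow_div_sub_mul_sub (hζ : IsPrimitiveRoot ζ N) {r b₁ b₂ : K} (hb : b₁ ≠ b₂)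
    (h₁ : r ^ N ≠ b₁ ^ N) (h₂ : r ^ N ≠ b₂ ^ N) :
    ∑ ρ ∈ range N, r * ζ ^ ρ / ((r * ζ ^ ρ - b₁) * (r * ζ ^ ρ - b₂)) =
      N * r ^ N * (b₁ ^ N - b₂ ^ N) / ((b₁ - b₂) * (b₁ ^ N - r ^ N) * (b₂ ^ N - r ^ N)) := by
  have hne {b : K} (h : r ^ N ≠ b ^ N) (ρ : ℕ) : r * ζ ^ ρ ≠ b := fun e =>
    h (hζ.pow_mul_pow_eq r ρ ▸ e ▸ rfl)
  simp_rw [div_sub_mul_sub_eq hb (hne h₁ _) (hne h₂ _), ← sum_div, sum_sub_distrib,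
    hζ.sum_div_mul_pow_sub h₁, hζ.sum_div_mul_pow_sub h₂]
  have := sub_ne_zero.mpr hb
  have := sub_ne_zero.mpr h₁
  have := sub_ne_zero.mpr h₂
  have := sub_ne_zero.mpr h₁.symm
  have := sub_ne_zero.mpr h₂.symm
  field_simp
  ring

end IsPrimitiveRoot

end

theorem S3_summation (N : ℕ) (hN : 1 ≤ N) (ω : ℂ)
    (hω : ω = Complex.exp (2 * (Real.pi : ℂ) * Complex.I / (N : ℂ)))
    (r b₁ b₂ : ℂ) (hb : b₁ ≠ b₂) (h1 : r ^ N ≠ b₁ ^ N) (h2 : r ^ N ≠ b₂ ^ N) :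
    ∑ ρ ∈ Finset.range N,
        (r * ω ^ (-(ρ : ℤ))) /
          ((r * ω ^ (-(ρ : ℤ)) - b₁) * (r * ω ^ (-(ρ : ℤ)) - b₂)) =
      (N : ℂ) * r ^ N * (b₁ ^ N - b₂ ^ N) /
        ((b₁ - b₂) * (b₁ ^ N - r ^ N) * (b₂ ^ N - r ^ N)) := by
  have hω' : IsPrimitiveRoot ω⁻¹ N := (hω ▸ Complex.isPrimitiveRoot_exp N (by omega)).inv
  simp only [zpow_neg, zpow_natCast, ← inv_pow]
  exact hω'.sum_mul_pow_div_sub_mul_sub hb h1 h2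
end

section
/- Let N ≥ 1 and n ≥ 3 be integers and ω = exp(2πi/N). For complex parameters r_1, ..., r_{m} and pairwise distinct b_1, ..., b_{m+1} with r_l^N ≠ b_k^N for all l, k, define S(r_1,...,r_m; b_1,...,b_{m+1}) = ∑_{(ρ_1,...,ρ_m) ∈ (ℤ/N)^m} ∏_{l=1}^{m} [ a_l ∏_{j=l+1}^{m} (a_l − a_j) / ∏_{k=1}^{m+1} (a_l − b_k) ], where a_l = r_l ω^{−ρ_l}. Then for r_1, ..., r_{n−2} and pairwise distinct b_1, ..., b_{n−1} with r_l^N ≠ b_k^N for all l, k: S(r_1,...,r_{n−2}; b_1,...,b_{n−1}) = N r_{n−2}^N ∑_{k=1}^{n−1} S(r_1,...,r_{n−3}; b_1,...,b_{k−1},b_{k+1},...,b_{n−1}) / ( (r_{n−2}^N − b_k^N) ∏_{s=1, s≠k}^{n−1} (b_k − b_s) ). -/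
/-!
Sum over the last phase first. With `c = r_m ω^{-ρ_m}` and the other phases fixed, the
`ρ_m`-dependent factors of the summand are `c g(c) / ∏_k (c - b_k)` with `g = ∏_l (a_l - X)` of
degree `m < m + 2`. Partial fractions at the distinct nodes `b_k` (Lagrange interpolation of `g`)
reduce the sum over `ρ_m` to `∑_c c / (c - b) = N r^N / (r^N - b^N)`, which follows from the
logarithmic derivative of `X^N - r^N = ∏_c (X - c)`. Finally `g(b_k) = ∏_l (a_l - b_k)` cancels
the factor `a_l - b_k` in each remaining denominator, leaving the phase sum without `b_k`.
-/

open Finset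

/-- The phase sum `S(r₁,...,r_m; b₁,...,b_{m+1})` from the Appendix of the paper,
with `a_l = r_l ω^{-ρ_l}`. -/
noncomputable def phaseSum (N : ℕ) (ω : ℂ) (m : ℕ) (r : Fin m → ℂ)
    (b : Fin (m + 1) → ℂ) : ℂ :=
  ∑ ρ : Fin m → Fin N,
    ∏ l : Fin m,
      (r l * ω ^ (-((ρ l : ℕ) : ℤ)) *
        (∏ j ∈ Finset.univ.filter (fun j => l < j),
          (r l * ω ^ (-((ρ l : ℕ) : ℤ)) - r j * ω ^ (-((ρ j : ℕ) : ℤ)))) /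
        ∏ k : Fin (m + 1), (r l * ω ^ (-((ρ l : ℕ) : ℤ)) - b k))

open Polynomial

section

variable {K ι : Type*} [Field K]

theorem degree_prod_C_sub_X (s : Finset ι) (A : ι → K) :
    (∏ l ∈ s, (C (A l) - X)).degree = (#s : WithBot ℕ) := by
  have h : ∀ a : K, (C a - X).degree = 1 := fun a => by
    rw [← neg_sub, degree_neg, degree_X_sub_C]
  simp [degree_prod, h]

variable [Fintype ι] [DecidableEq ι]

theorem eval_div_prod_sub_eq_sum {b : ι → K} (hb : Function.Injective b) {g : K[X]}
    (hg : g.degree < Fintype.card ι) {x : K} (hx : ∀ k, x ≠ b k) :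
    g.eval x / ∏ k, (x - b k) =
      ∑ k, g.eval (b k) / ((x - b k) * ∏ s ∈ univ.erase k, (b k - b s)) := by
  have h := Lagrange.eval_interpolate_not_at_node (s := univ) (v := b)
    (fun k => g.eval (b k)) (x := x) (fun k _ => hx k)
  rw [← Lagrange.eq_interpolate hb.injOn (by simpa using hg), Lagrange.eval_nodal] at h
  rw [h, mul_div_cancel_left₀ _ (prod_ne_zero_iff.2 fun k _ => sub_ne_zero.2 (hx k))]
  refine sum_congr rfl fun k _ => ?_
  rw [Lagrange.nodalWeight, prod_inv_distrib]
  field_simp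

theorem IsPrimitiveRoot.mul_pow_ne {ζ : K} {N : ℕ} (hζ : IsPrimitiveRoot ζ N) {r b : K}
    (h : r ^ N ≠ b ^ N) (i : ℕ) : r * ζ ^ i ≠ b := by
  rintro rfl
  rw [mul_pow, ← pow_mul, mul_comm i, pow_mul, hζ.pow_eq_one, one_pow, mul_one] at h
  exact h rfl

theorem IsPrimitiveRoot.sum_range_inv_sub_mul_pow {ζ : K} {N : ℕ} (hζ : IsPrimitiveRoot ζ N)
    {α x : K} (hx : x ^ N ≠ α ^ N) :
    ∑ i ∈ range N, (x - α * ζ ^ i)⁻¹ = N * x ^ (N - 1) / (x ^ N - α ^ N) := by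
  have hsplit := X_pow_sub_C_splits_of_isPrimitiveRoot hζ (rfl : α ^ N = α ^ N)
  have heval : (X ^ N - C (α ^ N)).eval x ≠ 0 := by simpa [sub_eq_zero] using hx
  have h := hsplit.eval_derivative_div_eval_of_ne_zero heval
  rw [← nthRoots, hζ.nthRoots_eq rfl, Multiset.map_map, derivative_sub, derivative_X_pow,
    derivative_C] at h
  rw [Finset.sum, Finset.range_val]
  simpa [one_div, Function.comp_def, mul_comm] using h.symm

theorem IsPrimitiveRoot.sum_mul_pow_div_mul_pow_sub {ζ : K} {N : ℕ} (hζ : IsPrimitiveRoot ζ N)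
    {r b : K} (h : r ^ N ≠ b ^ N) :
    ∑ i : Fin N, r * ζ ^ (i : ℕ) / (r * ζ ^ (i : ℕ) - b) = N * r ^ N / (r ^ N - b ^ N) := by
  have hN : N ≠ 0 := by rintro rfl; simp at h
  have hterm : ∀ i : ℕ, r * ζ ^ i / (r * ζ ^ i - b) = 1 - b * (b - r * ζ ^ i)⁻¹ := by
    intro i
    have hi := sub_ne_zero.2 (hζ.mul_pow_ne h i)
    have hi' := sub_ne_zero.2 (hζ.mul_pow_ne h i).symm
    field_simp
    ring
  have hb : b * (N * b ^ (N - 1) / (b ^ N - r ^ N)) = N * b ^ N / (b ^ N - r ^ N) := by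
    rw [← mul_div_assoc, mul_left_comm, ← pow_succ', Nat.sub_add_cancel (Nat.pos_of_ne_zero hN)]
  rw [Fin.sum_univ_eq_sum_range (fun i => r * ζ ^ i / (r * ζ ^ i - b)),
    sum_congr rfl fun i _ => hterm i, sum_sub_distrib, ← mul_sum,
    hζ.sum_range_inv_sub_mul_pow h.symm, hb, sum_const, card_range, nsmul_one]
  have hd := sub_ne_zero.2 h
  have hd' := sub_ne_zero.2 h.symm
  field_simp
  ring

theorem IsPrimitiveRoot.sum_mul_eval_div_prod_sub {ζ : K} {N : ℕ} (hζ : IsPrimitiveRoot ζ N)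
    {b : ι → K} (hb : Function.Injective b) {g : K[X]} (hg : g.degree < Fintype.card ι)
    {r : K} (hrb : ∀ k, r ^ N ≠ b k ^ N) :
    ∑ i : Fin N, r * ζ ^ (i : ℕ) * g.eval (r * ζ ^ (i : ℕ)) / ∏ k, (r * ζ ^ (i : ℕ) - b k) =
      N * r ^ N * ∑ k, g.eval (b k) / ((r ^ N - b k ^ N) * ∏ s ∈ univ.erase k, (b k - b s)) := by
  calc _ = ∑ i : Fin N, ∑ k, (g.eval (b k) / ∏ s ∈ univ.erase k, (b k - b s)) *
          (r * ζ ^ (i : ℕ) / (r * ζ ^ (i : ℕ) - b k)) := by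
        refine sum_congr rfl fun i _ => ?_
        rw [mul_div_assoc, eval_div_prod_sub_eq_sum hb hg fun k => hζ.mul_pow_ne (hrb k) i,
          mul_sum]
        refine sum_congr rfl fun k _ => ?_
        simp only [div_eq_mul_inv, mul_inv]
        ring
    _ = ∑ k, (g.eval (b k) / ∏ s ∈ univ.erase k, (b k - b s)) *
          (N * r ^ N / (r ^ N - b k ^ N)) := by
        rw [sum_comm]
        simp_rw [← mul_sum, hζ.sum_mul_pow_div_mul_pow_sub (hrb _)]
    _ = _ := by
        rw [mul_sum]
        refine sum_congr rfl fun k _ => ?_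
        simp only [div_eq_mul_inv, mul_inv]
        ring

end

section

variable {K : Type*} [Field K] {m n : ℕ}

def phaseSummand (a : Fin m → K) (b : Fin n → K) : K :=
  ∏ l, a l * (∏ j ∈ univ.filter (fun j => l < j), (a l - a j)) / ∏ k, (a l - b k)

theorem phaseSummand_eq_mul_last (a : Fin (m + 1) → K) (b : Fin n → K) :
    phaseSummand a b = phaseSummand (fun l => a l.castSucc) b *
      (a (Fin.last m) * (∏ l : Fin m, (a l.castSucc - a (Fin.last m))) /
        ∏ k, (a (Fin.last m) - b k)) := by
  have hlast : univ.filter (fun j => Fin.last m < j) = ∅ :=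
    filter_eq_empty_iff.2 fun j _ => not_lt.2 (Fin.le_last j)
  have hcast : ∀ l : Fin m,
      ∏ j ∈ univ.filter (fun j => l.castSucc < j), (a l.castSucc - a j) =
        (∏ j ∈ univ.filter (fun j => l < j), (a l.castSucc - a j.castSucc)) *
          (a l.castSucc - a (Fin.last m)) := by
    intro l
    simp only [prod_filter, Fin.prod_univ_castSucc, Fin.castSucc_lt_castSucc_iff,
      Fin.castSucc_lt_last, if_true]
  rw [phaseSummand, Fin.prod_univ_castSucc, hlast, prod_empty, mul_one]
  simp only [hcast, phaseSummand, ← mul_assoc, mul_div_right_comm _ (a _ - a (Fin.last m)),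
    prod_mul_distrib]
  ring

theorem phaseSummand_mul_prod_sub (a : Fin m → K) (b : Fin (n + 1) → K) (k : Fin (n + 1))
    (hab : ∀ l j, a l ≠ b j) :
    phaseSummand a b * ∏ l, (a l - b k) = phaseSummand a (fun j => b (k.succAbove j)) := by
  rw [phaseSummand, phaseSummand, ← prod_mul_distrib]
  refine prod_congr rfl fun l _ => ?_
  rw [Fin.prod_univ_succAbove _ k, div_mul_eq_mul_div, mul_comm _ (a l - b k),
    mul_div_mul_left _ _ (sub_ne_zero.2 (hab l k))]

end

theorem phaseSum_eq_sum_phaseSummand (N : ℕ) (ω : ℂ) (m : ℕ) (r : Fin m → ℂ)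
    (b : Fin (m + 1) → ℂ) :
    phaseSum N ω m r b =
      ∑ ρ : Fin m → Fin N, phaseSummand (fun l => r l * ω⁻¹ ^ (ρ l : ℕ)) b := by
  simp only [phaseSum, phaseSummand, zpow_neg, zpow_natCast, inv_pow]

theorem phaseSum_succ (N : ℕ) (ω : ℂ) (m : ℕ) (r : Fin (m + 1) → ℂ) (b : Fin (m + 2) → ℂ) :
    phaseSum N ω (m + 1) r b =
      ∑ ρ : Fin m → Fin N, phaseSummand (fun l => r l.castSucc * ω⁻¹ ^ (ρ l : ℕ)) b *
        ∑ x : Fin N, r (Fin.last m) * ω⁻¹ ^ (x : ℕ) *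
            (∏ l, (r l.castSucc * ω⁻¹ ^ (ρ l : ℕ) - r (Fin.last m) * ω⁻¹ ^ (x : ℕ))) /
          ∏ k, (r (Fin.last m) * ω⁻¹ ^ (x : ℕ) - b k) := by
  rw [phaseSum_eq_sum_phaseSummand, ← (Fin.snocEquiv _).sum_comp, Fintype.sum_prod_type,
    sum_comm]
  simp only [Fin.snocEquiv_apply, phaseSummand_eq_mul_last, Fin.snoc_castSucc, Fin.snoc_last,
    mul_sum]

theorem phaseSum_recursion_general (N : ℕ) (ω : ℂ)
    (hω : ω = Complex.exp (2 * (Real.pi : ℂ) * Complex.I / (N : ℂ)))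
    (m : ℕ) (r : Fin (m + 1) → ℂ) (b : Fin (m + 2) → ℂ)
    (hb : Function.Injective b)
    (hrb : ∀ l k, (r l) ^ N ≠ (b k) ^ N) :
    phaseSum N ω (m + 1) r b =
      (N : ℂ) * (r (Fin.last m)) ^ N *
        ∑ k : Fin (m + 2),
          phaseSum N ω m (fun l => r l.castSucc) (fun j => b (k.succAbove j)) /
            (((r (Fin.last m)) ^ N - (b k) ^ N) *
              ∏ s ∈ Finset.univ.erase k, (b k - b s)) := by
  have hN : N ≠ 0 := by rintro rfl; exact hrb 0 0 (by simp)
  have hζ : IsPrimitiveRoot ω⁻¹ N := (hω ▸ Complex.isPrimitiveRoot_exp N hN).inv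
  have hinner : ∀ A : Fin m → ℂ,
      ∑ x : Fin N, r (Fin.last m) * ω⁻¹ ^ (x : ℕ) *
          (∏ l, (A l - r (Fin.last m) * ω⁻¹ ^ (x : ℕ))) /
        ∏ k, (r (Fin.last m) * ω⁻¹ ^ (x : ℕ) - b k) =
      N * r (Fin.last m) ^ N * ∑ k, (∏ l, (A l - b k)) /
        ((r (Fin.last m) ^ N - b k ^ N) * ∏ s ∈ univ.erase k, (b k - b s)) := fun A => by
    have hdeg : (∏ l, (C (A l) - X)).degree < (Fintype.card (Fin (m + 2)) : WithBot ℕ) := by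
      rw [degree_prod_C_sub_X, card_univ, Fintype.card_fin, Fintype.card_fin]
      exact_mod_cast Nat.lt_add_of_pos_right two_pos
    simpa [eval_prod] using hζ.sum_mul_eval_div_prod_sub hb hdeg (hrb (Fin.last m))
  have hcancel : ∀ (ρ : Fin m → Fin N) k,
      phaseSummand (fun l => r l.castSucc * ω⁻¹ ^ (ρ l : ℕ)) b *
          ∏ l, (r l.castSucc * ω⁻¹ ^ (ρ l : ℕ) - b k) =
        phaseSummand (fun l => r l.castSucc * ω⁻¹ ^ (ρ l : ℕ)) (fun j => b (k.succAbove j)) :=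
    fun ρ k => phaseSummand_mul_prod_sub _ _ k fun l j => hζ.mul_pow_ne (hrb _ j) _
  rw [phaseSum_succ]
  simp_rw [hinner, phaseSum_eq_sum_phaseSummand, sum_div, mul_sum, ← hcancel]
  rw [sum_comm]
  refine sum_congr rfl fun k _ => sum_congr rfl fun ρ _ => ?_
  ring

theorem phaseSum_recursion (N : ℕ) (hN : 1 ≤ N) (ω : ℂ)
    (hω : ω = Complex.exp (2 * (Real.pi : ℂ) * Complex.I / (N : ℂ)))
    (m : ℕ) (r : Fin (m + 1) → ℂ) (b : Fin (m + 2) → ℂ)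
    (hb : Function.Injective b)
    (hrb : ∀ l k, (r l) ^ N ≠ (b k) ^ N) :
    phaseSum N ω (m + 1) r b =
      (N : ℂ) * (r (Fin.last m)) ^ N *
        ∑ k : Fin (m + 2),
          phaseSum N ω m (fun l => r l.castSucc) (fun j => b (k.succAbove j)) /
            (((r (Fin.last m)) ^ N - (b k) ^ N) *
              ∏ s ∈ Finset.univ.erase k, (b k - b s)) :=
  phaseSum_recursion_general N ω hω m r b hb hrb
end

section
/- Let n ≥ 1, let r_1, ..., r_{n−1} be complex numbers with r_l^2 ≠ r_m^2 for all l ≠ m, and let μ_1, ..., μ_n be arbitrary complex numbers. Then ∑_{(ρ_1,...,ρ_{n−1}) ∈ {0,1}^{n−1}} ∏_{l=1}^{n−1} (−1)^{ρ_l} · ∏_{l=1}^{n−1} ∏_{k=1}^{n} ((−1)^{ρ_l} r_l + μ_k) / ∏_{1≤l<m≤n−1} ((−1)^{ρ_m} r_m + (−1)^{ρ_l} r_l) = 2^{n−1} (∏_{l=1}^{n−1} r_l) ∏_{1≤i<j≤n} (μ_i + μ_j). -/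
/-!
Write `s_l = ±r_l` for the signed parameters and view both sides as polynomials in the last
variable `x = μ_n`; each has degree at most `n - 1`. At `x = s_p`, every term with the opposite
sign at `p` contains the factor `-s_p + x = 0`, while in the surviving terms the numerator factors
`s_l + x` cancel the denominator factors `s_l + s_p`. What is left is `2 r_p ∏_k (s_p + μ_k)` times
the same sum with `r_p` and `μ_n` removed, which matches the right-hand side by induction. So the
two polynomials agree at the `2(n - 1)` points `±r_l`, distinct as long as no `r_l` vanishes; and
if `r_p = 0`, flipping the sign at `p` negates every term, so both sides vanish. Removing `r_p`
and `μ_n` keeps the number of `μ`s at one or zero more than the number of `r`s, so the induction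
runs over both cases.
-/

open Finset Polynomial

section PairSums

variable {R : Type*} [CommSemiring R]

def prodPairSums {n : ℕ} (x : Fin n → R) : R :=
  ∏ i, ∏ j ∈ univ.filter (fun j => i < j), (x i + x j)

theorem prodPairSums_of_le_one {n : ℕ} (hn : n ≤ 1) (x : Fin n → R) : prodPairSums x = 1 := by
  refine prod_eq_one fun i _ => prod_eq_one fun j hj => ?_
  have : i < j := (mem_filter.1 hj).2
  omega

theorem prodPairSums_succAbove {n : ℕ} (x : Fin (n + 1) → R) (p : Fin (n + 1)) :
    prodPairSums x = (∏ i, (x (p.succAbove i) + x p)) * prodPairSums (x ∘ p.succAbove) := by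
  simp only [prodPairSums, prod_filter, Fin.prod_univ_succAbove _ p, lt_irrefl, if_false,
    one_mul, Function.comp_apply, (Fin.strictMono_succAbove p).lt_iff_lt,
    prod_mul_distrib, ← mul_assoc]
  congr 1
  rw [← prod_mul_distrib]
  refine prod_congr rfl fun i _ => ?_
  rcases (Fin.succAbove_ne p i).lt_or_gt with h | h
  · rw [if_neg h.asymm, if_pos h, one_mul]
  · rw [if_pos h, if_neg h.asymm, mul_one, add_comm]

theorem prodPairSums_snoc {n : ℕ} (x : Fin n → R) (y : R) :
    prodPairSums (Fin.snoc x y : Fin (n + 1) → R) = (∏ i, (x i + y)) * prodPairSums x := by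
  simp [prodPairSums_succAbove _ (Fin.last n)]

end PairSums

section Signs

variable {R : Type*} [CommRing R]

def altSign (a : Fin 2) : R := (-1) ^ (a : ℕ)

theorem altSign_mul_self (a : Fin 2) : altSign a * altSign a = (1 : R) := by
  fin_cases a <;> simp [altSign]

theorem sum_altSign : ∑ a : Fin 2, altSign a = (0 : R) := by
  simp [altSign]

theorem altSign_of_ne {a b : Fin 2} (h : a ≠ b) : altSign a = -(altSign b : R) := by
  fin_cases a <;> fin_cases b <;> simp_all [altSign]

theorem altSign_mul_add_altSign_mul_ne_zero {x y : R} (h : x ^ 2 ≠ y ^ 2) (a b : Fin 2) :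
    altSign a * x + altSign b * y ≠ 0 := fun hsum =>
  h <| by linear_combination (altSign a * x - altSign b * y) * hsum
    - x ^ 2 * altSign_mul_self (R := R) a + y ^ 2 * altSign_mul_self (R := R) b

theorem injective_altSign_mul [NoZeroDivisors R] [NeZero (2 : R)] {N : ℕ} {r : Fin N → R}
    (hr : Pairwise fun l m => r l ^ 2 ≠ r m ^ 2) (h0 : ∀ l, r l ≠ 0) :
    Function.Injective fun q : Fin N × Fin 2 => altSign q.2 * r q.1 := by
  rintro ⟨l, a⟩ ⟨m, b⟩ (h : altSign a * r l = altSign b * r m)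
  obtain rfl : l = m := by
    by_contra hlm
    exact hr hlm <| by
      linear_combination (altSign a * r l + altSign b * r m) * h
        - r l ^ 2 * altSign_mul_self (R := R) a + r m ^ 2 * altSign_mul_self (R := R) b
  obtain rfl : a = b := by
    by_contra hab
    rw [altSign_of_ne hab] at h
    exact mul_ne_zero two_ne_zero (h0 l) <| by
      linear_combination (-altSign b) * h - 2 * r l * altSign_mul_self (R := R) b
  rfl

end Signs

theorem natDegree_C_mul_prod_X_add_C_le {R : Type*} [CommRing R] [Nontrivial R] (c : R) {m : ℕ}
    (a : Fin m → R) :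
    (C c * ∏ i, (X + C (a i))).natDegree ≤ m :=
  (natDegree_C_mul_le _ _).trans <| (natDegree_prod_le _ _).trans <| by simp

section SignedSum

variable {F : Type*} [Field F] {N K : ℕ}

def signedTerm (r : Fin N → F) (μ : Fin K → F) (ρ : Fin N → Fin 2) : F :=
  (∏ l, altSign (ρ l)) * (∏ l, ∏ k, (altSign (ρ l) * r l + μ k)) /
    prodPairSums fun l => altSign (ρ l) * r l

def signedSum (r : Fin N → F) (μ : Fin K → F) : F :=
  ∑ ρ : Fin N → Fin 2, signedTerm r μ ρ

theorem signedTerm_insertNth (r : Fin (N + 1) → F) (μ : Fin K → F) (p : Fin (N + 1))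
    (b : Fin 2) (ρ : Fin N → Fin 2) :
    signedTerm r μ (p.insertNth b ρ) =
      altSign b * (∏ k, (altSign b * r p + μ k)) /
        (∏ i, (altSign (ρ i) * r (p.succAbove i) + altSign b * r p)) *
        signedTerm (r ∘ p.succAbove) μ ρ := by
  rw [signedTerm, prodPairSums_succAbove _ p]
  simp only [Fin.prod_univ_succAbove _ p, Fin.insertNth_apply_same,
    Fin.insertNth_apply_succAbove, signedTerm, Function.comp_def]
  ring

theorem signedTerm_snoc (r : Fin N → F) (μ : Fin K → F) (x : F) (ρ : Fin N → Fin 2) :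
    signedTerm r (Fin.snoc μ x : Fin (K + 1) → F) ρ =
      signedTerm r μ ρ * ∏ l, (altSign (ρ l) * r l + x) := by
  simp only [signedTerm, Fin.prod_univ_castSucc, Fin.snoc_castSucc, Fin.snoc_last,
    prod_mul_distrib]
  ring

theorem signedSum_eq_sum_insertNth (r : Fin (N + 1) → F) (μ : Fin K → F) (p : Fin (N + 1)) :
    signedSum r μ = ∑ b : Fin 2, ∑ ρ : Fin N → Fin 2, signedTerm r μ (p.insertNth b ρ) := by
  rw [signedSum, ← (Fin.insertNthEquiv (fun _ => Fin 2) p).sum_comp, Fintype.sum_prod_type]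
  rfl

theorem signedSum_eq_zero_of_eq_zero {r : Fin (N + 1) → F} {p : Fin (N + 1)} (hp : r p = 0)
    (μ : Fin K → F) : signedSum r μ = 0 := by
  simp only [signedSum_eq_sum_insertNth r μ p, signedTerm_insertNth, hp, mul_zero, zero_add,
    mul_div_assoc, mul_assoc, ← mul_sum, ← sum_mul, sum_altSign, zero_mul]

theorem signedSum_snoc_altSign_mul {r : Fin (N + 1) → F}
    (hr : Pairwise fun l m => r l ^ 2 ≠ r m ^ 2) (p : Fin (N + 1)) (b : Fin 2) (μ : Fin K → F) :
    signedSum r (Fin.snoc μ (altSign b * r p) : Fin (K + 1) → F) =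
      2 * r p * (∏ k, (altSign b * r p + μ k)) * signedSum (r ∘ p.succAbove) μ := by
  rw [signedSum_eq_sum_insertNth r _ p, sum_eq_single b, signedSum, mul_sum]
  · refine sum_congr rfl fun ρ _ => ?_
    have hD : ∏ i, (altSign (ρ i) * r (p.succAbove i) + altSign b * r p) ≠ 0 :=
      prod_ne_zero_iff.2 fun i _ =>
        altSign_mul_add_altSign_mul_ne_zero (hr (p.succAbove_ne i)) _ _
    rw [signedTerm_insertNth, signedTerm_snoc, Fin.prod_univ_castSucc]
    simp only [Fin.snoc_castSucc, Fin.snoc_last, Function.comp_apply]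
    field_simp
    rw [sq, altSign_mul_self]
    ring
  · intro b' _ hb'
    refine sum_eq_zero fun ρ _ => ?_
    rw [signedTerm_insertNth, Fin.prod_univ_castSucc, Fin.snoc_last, altSign_of_ne hb']
    simp
  · simp

theorem signedSum_snoc_eq_of_succAbove [NeZero (2 : F)] (hK : K ≤ N + 1) {r : Fin (N + 1) → F}
    (hr : Pairwise fun l m => r l ^ 2 ≠ r m ^ 2) (h0 : ∀ l, r l ≠ 0) (μ : Fin K → F)
    (ih : ∀ p : Fin (N + 1), signedSum (r ∘ p.succAbove) μ =
      2 ^ N * (∏ i, r (p.succAbove i)) * prodPairSums μ) (x : F) :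
    signedSum r (Fin.snoc μ x : Fin (K + 1) → F) =
      2 ^ (N + 1) * (∏ l, r l) * prodPairSums (Fin.snoc μ x : Fin (K + 1) → F) := by
  set P : F[X] := ∑ ρ : Fin (N + 1) → Fin 2,
    C (signedTerm r μ ρ) * ∏ l, (X + C (altSign (ρ l) * r l))
  set Q : F[X] := C (2 ^ (N + 1) * (∏ l, r l) * prodPairSums μ) * ∏ k, (X + C (μ k))
  have hP (y : F) : P.eval y = signedSum r (Fin.snoc μ y : Fin (K + 1) → F) := by
    simp [P, signedSum, signedTerm_snoc, eval_finsetSum, eval_prod, add_comm]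
  have hQ (y : F) :
      Q.eval y = 2 ^ (N + 1) * (∏ l, r l) * prodPairSums (Fin.snoc μ y : Fin (K + 1) → F) := by
    simp only [Q, eval_mul, eval_C, eval_prod, eval_add, eval_X, prodPairSums_snoc, add_comm]
    ring
  have hPQ : P = Q := by
    refine eq_of_natDegree_lt_card_of_eval_eq P Q (injective_altSign_mul hr h0)
      (fun ⟨p, b⟩ => ?_) ?_
    · rw [hP, hQ, signedSum_snoc_altSign_mul hr, ih, prodPairSums_snoc,
        Fin.prod_univ_succAbove r p]
      simp_rw [add_comm (μ _)]
      ring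
    · have hPdeg : P.natDegree ≤ N + 1 :=
        natDegree_sum_le_of_forall_le _ _ fun ρ _ => natDegree_C_mul_prod_X_add_C_le _ _
      have hQdeg : Q.natDegree ≤ K := natDegree_C_mul_prod_X_add_C_le _ _
      simp only [Fintype.card_prod, Fintype.card_fin]
      omega
  rw [← hP, hPQ, hQ]

theorem signedSum_eq_two_pow_mul [NeZero (2 : F)] :
    ∀ {N K : ℕ}, N ≤ K → K ≤ N + 1 → ∀ (r : Fin N → F), (Pairwise fun l m => r l ^ 2 ≠ r m ^ 2) →
      ∀ μ : Fin K → F, signedSum r μ = 2 ^ N * (∏ l, r l) * prodPairSums μ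
  | 0, K, _, hK, r, _, μ => by
    simp [signedSum, signedTerm, prodPairSums_of_le_one hK, prodPairSums_of_le_one zero_le_one]
  | N + 1, 0, hNK, _, _, _, _ => absurd hNK (by omega)
  | N + 1, K + 1, hNK, hKN, r, hr, μ => by
    obtain ⟨l, hl⟩ | h0 := em (∃ l, r l = 0)
    · rw [signedSum_eq_zero_of_eq_zero hl, prod_eq_zero (mem_univ l) hl]
      ring
    rw [← Fin.snoc_init_self μ]
    exact signedSum_snoc_eq_of_succAbove (by omega) hr (fun l hl => h0 ⟨l, hl⟩) _
      (fun p => signedSum_eq_two_pow_mul (by omega) (by omega) _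
        (hr.comp_of_injective Fin.succAbove_right_injective) _) _

end SignedSum

theorem ising_norm_summation_general (n : ℕ)
    (r : Fin (n - 1) → ℂ) (hr : ∀ l m, l ≠ m → (r l) ^ 2 ≠ (r m) ^ 2)
    (μ : Fin n → ℂ) :
    ∑ ρ : Fin (n - 1) → Fin 2,
        (∏ l : Fin (n - 1), (-1 : ℂ) ^ ((ρ l : ℕ))) *
          (∏ l : Fin (n - 1), ∏ k : Fin n,
            ((-1 : ℂ) ^ ((ρ l : ℕ)) * r l + μ k)) /
          ∏ l : Fin (n - 1), ∏ m ∈ Finset.univ.filter (fun m => l < m),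
            ((-1 : ℂ) ^ ((ρ m : ℕ)) * r m + (-1 : ℂ) ^ ((ρ l : ℕ)) * r l) =
      2 ^ (n - 1) * (∏ l : Fin (n - 1), r l) *
        ∏ i : Fin n, ∏ j ∈ Finset.univ.filter (fun j => i < j), (μ i + μ j) := by
  have key := signedSum_eq_two_pow_mul (n.sub_le 1) (by omega) r (fun l m => hr l m) μ
  simp only [signedSum, signedTerm, prodPairSums, altSign] at key
  convert key using 5 with ρ - l - m -
  exact add_comm _ _

theorem ising_norm_summation (n : ℕ) (hn : 1 ≤ n)
    (r : Fin (n - 1) → ℂ) (hr : ∀ l m, l ≠ m → (r l) ^ 2 ≠ (r m) ^ 2)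
    (μ : Fin n → ℂ) :
    ∑ ρ : Fin (n - 1) → Fin 2,
        (∏ l : Fin (n - 1), (-1 : ℂ) ^ ((ρ l : ℕ))) *
          (∏ l : Fin (n - 1), ∏ k : Fin n,
            ((-1 : ℂ) ^ ((ρ l : ℕ)) * r l + μ k)) /
          ∏ l : Fin (n - 1), ∏ m ∈ Finset.univ.filter (fun m => l < m),
            ((-1 : ℂ) ^ ((ρ m : ℕ)) * r m + (-1 : ℂ) ^ ((ρ l : ℕ)) * r l) =
      2 ^ (n - 1) * (∏ l : Fin (n - 1), r l) *
        ∏ i : Fin n, ∏ j ∈ Finset.univ.filter (fun j => i < j), (μ i + μ j) :=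
  ising_norm_summation_general n r hr μ
end
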